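/- Under the hypotheses of the previous statement (with (n-k) | δ, ν = δ/(n-k), and all non-trivially-zero full-size minors of H_L^c nonzero), the top coefficient H_ν ∈ F^{(n-k)×n} has full row rank n-k. -/
import Mathlib


open Polynomial Matrix

/-- A polynomial matrix `H` is left prime if in every factorization `H = M * H'`
with `M` square polynomial, the left factor `M` is unimodular (a unit). -/
def IsLeftPrimeMat {F : Type*} [Field F] {p q : ℕ}
    (H : Matrix (Fin p) (Fin q) (Polynomial F)) : Prop :=
  ∀ (M : Matrix (Fin p) (Fin p) (Polynomial F))
    (H' : Matrix (Fin p) (Fin q) (Polynomial F)),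
    H = M * H' → IsUnit M

/-- If `(n-k) ∣ δ`, `ν = δ/(n-k)`, `L = ⌊δ/k⌋ + δ/(n-k)`, and every
non-trivially-zero full-size minor of the `L`-th truncated sliding parity-check
matrix `H_L^c` (column indices `t_1 < … < t_{(L+1)(n-k)}` with
`t_{s(n-k)+1} ≤ sn` for `s = 1, …, L`) is nonzero, then the top coefficient `H_ν` has full row rank `n-k`. -/
theorem stmt6 {F : Type*} [Field F] (n k δ ν L : ℕ) (hk0 : 0 < k) (hk : k < n)
    (hδ : 0 < δ) (hdvd : (n - k) ∣ δ) (hν : ν = δ / (n - k))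
    (hL : L = δ / k + δ / (n - k))
    (H : ℕ → Matrix (Fin (n - k)) (Fin n) F)
    (hHν : ∀ s, ν < s → H s = 0)
    (Hc : Matrix (Fin ((L + 1) * (n - k))) (Fin ((L + 1) * n)) F)
    (hHc : ∀ (i : Fin ((L + 1) * (n - k))) (j : Fin ((L + 1) * n)),
      Hc i j =
        if (j : ℕ) / n ≤ (i : ℕ) / (n - k) then
          H ((i : ℕ) / (n - k) - (j : ℕ) / n)
            ⟨(i : ℕ) % (n - k), Nat.mod_lt _ (by omega)⟩
            ⟨(j : ℕ) % n, Nat.mod_lt _ (by omega)⟩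
        else 0)
    (hminors : ∀ t : Fin ((L + 1) * (n - k)) → Fin ((L + 1) * n),
      StrictMono t →
      (∀ s, 1 ≤ s → s ≤ L →
        ∀ i : Fin ((L + 1) * (n - k)), (i : ℕ) = s * (n - k) → (t i : ℕ) < s * n) →
      (Hc.submatrix id t).det ≠ 0) :
    (H ν).rank = n - k := by
  have hd0 : 0 < n - k := by omega
  set q := δ / k with hq
  have hνd : ν * (n - k) = δ := by rw [hν]; exact Nat.div_mul_cancel hdvd
  have hLq : L = q + ν := by rw [hL, hν]
  have hδk : δ < (q + 1) * k := by
    have h1 : k * q + δ % k = δ := Nat.div_add_mod δ k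
    have h2 : δ % k < k := Nat.mod_lt _ hk0
    nlinarith
  -- key inequality: all chosen columns lie in the first (q+1) column blocks
  have hkey : (L + 1) * (n - k) ≤ (q + 1) * n := by
    have hnkd : n = k + (n - k) := by omega
    nlinarith
  have hsplit : (L + 1) * (n - k) = L * (n - k) + (n - k) := by ring
  -- main step: rows of H ν are linearly independent
  have hinj : ∀ v : Fin (n - k) → F, Matrix.vecMul v (H ν) = 0 → v = 0 := by
    intro v hv
    by_contra hv0
    have hNle : (L + 1) * (n - k) ≤ (L + 1) * n := Nat.mul_le_mul_left _ (by omega)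
    set t : Fin ((L + 1) * (n - k)) → Fin ((L + 1) * n) :=
      fun i => ⟨(i : ℕ), lt_of_lt_of_le i.2 hNle⟩ with ht
    have hmono : StrictMono t := fun _ _ h => h
    have hcond : ∀ s, 1 ≤ s → s ≤ L →
        ∀ i : Fin ((L + 1) * (n - k)), (i : ℕ) = s * (n - k) → (t i : ℕ) < s * n := by
      intro s hs1 hs2 i hi
      show (i : ℕ) < s * n
      rw [hi]
      exact mul_lt_mul_of_pos_left (show n - k < n by omega) (by omega)
    have hdet := hminors t hmono hcond
    set w : Fin ((L + 1) * (n - k)) → F := fun i =>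
      if h : L * (n - k) ≤ (i : ℕ) then v ⟨(i : ℕ) - L * (n - k), by omega⟩ else 0 with hw
    have hwz : Matrix.vecMul w (Hc.submatrix id t) = 0 := by
      funext j
      have hcol : (j : ℕ) / n ≤ q := by
        have : (j : ℕ) < (q + 1) * n := lt_of_lt_of_le j.2 hkey
        exact Nat.lt_succ_iff.mp ((Nat.div_lt_iff_lt_mul (by omega)).mpr this)
      show ∑ i, w i * Hc (id i) (t j) = 0
      have hsum : ∑ i, w i * Hc (id i) (t j)
          = ∑ x : Fin (L * (n - k) + (n - k)), w (Fin.cast hsplit.symm x)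
              * Hc (id (Fin.cast hsplit.symm x)) (t j) :=
        Fintype.sum_equiv (finCongr hsplit) _ _ (fun i => rfl)
      rw [hsum, Fin.sum_univ_add]
      simp only [id_eq]
      have h0 : ∀ i : Fin (L * (n - k)),
          w (Fin.cast hsplit.symm (Fin.castAdd (n - k) i)) = 0 := by
        intro i
        have hvi : ((Fin.cast hsplit.symm (Fin.castAdd (n - k) i)) : ℕ) = (i : ℕ) := rfl
        refine dif_neg ?_
        rw [hvi]
        have := i.2
        omega
      have h1 : ∀ m : Fin (n - k),
          w (Fin.cast hsplit.symm (Fin.natAdd (L * (n - k)) m)) = v m := by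
        intro m
        refine (dif_pos (Nat.le_add_right _ _)).trans (congrArg v (Fin.ext ?_))
        show L * (n - k) + (m : ℕ) - L * (n - k) = (m : ℕ)
        omega
      -- evaluate the entries of Hc in the bottom block row
      have hentry : ∀ m : Fin (n - k),
          Hc (Fin.cast hsplit.symm (Fin.natAdd (L * (n - k)) m)) (t j)
          = H (L - (j : ℕ) / n) m ⟨(j : ℕ) % n, Nat.mod_lt _ (by omega)⟩ := by
        intro m
        have e1 : (L * (n - k) + (m : ℕ)) / (n - k) = L := by
          rw [Nat.add_comm, Nat.mul_comm, Nat.add_mul_div_left _ _ hd0,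
            Nat.div_eq_of_lt m.2, Nat.zero_add]
        have e2 : (L * (n - k) + (m : ℕ)) % (n - k) = (m : ℕ) := by
          rw [Nat.mul_comm, Nat.mul_add_mod, Nat.mod_eq_of_lt m.2]
        have hval : (((Fin.cast hsplit.symm (Fin.natAdd (L * (n - k)) m)) :
            Fin ((L + 1) * (n - k))) : ℕ) = L * (n - k) + (m : ℕ) := rfl
        have htj : ((t j : Fin ((L + 1) * n)) : ℕ) = (j : ℕ) := rfl
        rw [hHc]
        simp only [hval, htj, e1, e2]
        rw [if_pos (by omega)]
      have hA : ∑ i : Fin (L * (n - k)),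
          w (Fin.cast hsplit.symm (Fin.castAdd (n - k) i))
            * Hc (Fin.cast hsplit.symm (Fin.castAdd (n - k) i)) (t j) = 0 :=
        Finset.sum_eq_zero fun i _ => by rw [h0 i, zero_mul]
      rcases Nat.lt_or_ge ((j : ℕ) / n) q with hc | hc
      · -- column block strictly below q: the whole block row is zero there
        have hz : H (L - (j : ℕ) / n) = 0 := hHν _ (by omega)
        have hB : ∑ m : Fin (n - k),
            w (Fin.cast hsplit.symm (Fin.natAdd (L * (n - k)) m))
              * Hc (Fin.cast hsplit.symm (Fin.natAdd (L * (n - k)) m)) (t j) = 0 :=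
          Finset.sum_eq_zero fun m _ => by rw [hentry m, hz]; simp
        rw [hA, hB, add_zero]
      · -- column block equals q: the entry is H ν, killed by hv
        have hLν : L - (j : ℕ) / n = ν := by omega
        have hv' := congrFun hv ⟨(j : ℕ) % n, Nat.mod_lt _ (by omega)⟩
        simp only [Matrix.vecMul, dotProduct, Pi.zero_apply] at hv'
        have hB : ∑ m : Fin (n - k),
            w (Fin.cast hsplit.symm (Fin.natAdd (L * (n - k)) m))
              * Hc (Fin.cast hsplit.symm (Fin.natAdd (L * (n - k)) m)) (t j)
            = ∑ m : Fin (n - k), v m * H ν m ⟨(j : ℕ) % n, Nat.mod_lt _ (by omega)⟩ :=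
          Finset.sum_congr rfl fun m _ => by rw [h1 m, hentry m, hLν]
        rw [hA, hB, zero_add]
        exact hv'
    -- w is nonzero, contradicting det ≠ 0
    obtain ⟨m, hm⟩ := Function.ne_iff.mp hv0
    have hwm : w ⟨L * (n - k) + (m : ℕ), by omega⟩ = v m := by
      refine (dif_pos (Nat.le_add_right _ _)).trans (congrArg v (Fin.ext ?_))
      show L * (n - k) + (m : ℕ) - L * (n - k) = (m : ℕ)
      omega
    exact hm (by rw [← hwm, Matrix.eq_zero_of_vecMul_eq_zero hdet hwz]; rfl)
  -- conclude full row rank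
  have hinj' : Function.Injective ((H ν)ᵀ.mulVecLin) := by
    rw [← LinearMap.ker_eq_bot, LinearMap.ker_eq_bot']
    intro v hvv
    exact hinj v (by rwa [Matrix.mulVecLin_apply, Matrix.mulVec_transpose] at hvv)
  rw [← Matrix.rank_transpose, Matrix.rank, LinearMap.finrank_range_of_inj hinj']
  simp [Module.finrank_pi]
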